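/- arXiv:2011.02196 — 3 statements merged into one kernel-verified Lean document; each statement's English description precedes it below -/
import Mathlib

section
/- Let (H, ⟨·,·⟩_H) be a vRKHS of functions from [0,T] to ℝ^N with kernel K such that (s,t) ↦ K(s,t) is uniformly continuous on [0,T]². Let c_1,…,c_P : [0,T] → ℝ^N and d_1,…,d_P : [0,T] → ℝ be continuous. Let x₀ ∈ ℝ^N with c_i(0)ᵀx₀ < d_i(0) for all i, and suppose there exist ε₁,…,ε_P > 0 and x^ε ∈ H with x^ε(0) = x₀ and c_i(t)ᵀx^ε(t) + ε_i ≤ d_i(t) for all t ∈ [0,T] and all i. Let g : ℝ^N → ℝ be continuous and suppose L(x) := g(x(T)) + ‖x‖²_H is μ-strongly convex for some μ > 0. For a finite family of points t_m ∈ [0,T] and radii δ_m > 0 (m = 1,…,N₀) covering [0,T] (i.e. [0,T] ⊆ ∪_m [t_m−δ_m, t_m+δ_m]), define V₀ := {x ∈ H : c_i(t)ᵀx(t) ≤ d_i(t) ∀t,∀i} and V_{δ,fin} := {x ∈ H : η_i(δ_m,t_m)‖x‖_H + c_i(t_m)ᵀx(t_m) ≤ d_i(δ_m,t_m) ∀m,∀i},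 where η_i(δ,t) := sup_{s∈[t−δ,t+δ]∩[0,T]} ‖K(·,t)c_i(t) − K(·,s)c_i(s)‖_H and d_i(δ_m,t_m) := inf_{s∈[t_m−δ_m,t_m+δ_m]∩[0,T]} d_i(s). Then for every λ > 0 there exists δ̄ > 0 such that for every such finite covering with max_m δ_m ≤ δ̄: the minimizer x̄⁰ of L over V₀ ∩ {x ∈ H : x(0) = x₀} and the minimizer x̄^{δ,fin} of L over V_{δ,fin} ∩ {x ∈ H : x(0) = x₀} exist, are unique, and satisfy (1/γ_K)·sup_{t∈[0,T]} ‖x̄^{δ,fin}(t) − x̄⁰(t)‖ ≤ ‖x̄^{δ,fin} − x̄⁰‖_H ≤ λ, where γ_K := sup_{t∈[0,T], ‖p‖≤1} (pᵀK(t,t)p)^{1/2}. -/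
/-!
Evaluation at a time `t` is the adjoint of `p ↦ K(·,t)p`, hence a bounded linear map of norm at
most `γ_K`. This gives the `1/γ_K` estimate and makes both feasible sets closed and convex, so the
continuous strongly convex `L` has a unique minimiser on each (minimising sequences are Cauchy by
the midpoint estimate of strong convexity). By Cauchy–Schwarz, the second-order cone constraint at
`tₘ` implies the affine constraints on its whole window, so `V_{δ,fin} ⊆ V₀` and `L` grows
quadratically around `x̄⁰` on `V_{δ,fin}`. Conversely `z = θ x^ε + (1 - θ) x̄⁰` meets the affine
constraints with margin `θ ε`, and uniform continuity of `s ↦ K(·,s)cᵢ(s)` in `H` and of `dᵢ` on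
`[0,T]` puts `z` into `V_{δ,fin}` once `δ̄` is small. Taking `θ` with `L z < L x̄⁰ + μλ²/4` yields
`μ/4 ‖x̄^{δ,fin} - x̄⁰‖² ≤ L z - L x̄⁰ < μλ²/4`.
-/

open Set Filter Topology
open scoped RealInnerProductSpace

section Representer

variable {H E : Type*} [NormedAddCommGroup H] [InnerProductSpace ℝ H]
  [NormedAddCommGroup E] [InnerProductSpace ℝ E] {e : H → E} {r : E → H}

theorem isLinearMap_of_inner_representer (hr : ∀ f p, ⟪f, r p⟫ = ⟪p, e f⟫) :
    IsLinearMap ℝ e where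
  map_add f g := ext_inner_left ℝ fun p => by
    rw [inner_add_right, ← hr, ← hr, ← hr, inner_add_left]
  map_smul a f := ext_inner_left ℝ fun p => by
    rw [real_inner_smul_right, ← hr, ← hr, real_inner_smul_left]

theorem norm_le_of_inner_representer (hr : ∀ f p, ⟪f, r p⟫ = ⟪p, e f⟫) {γ : ℝ}
    (hγ : ∀ p, ‖p‖ ≤ 1 → ‖r p‖ ≤ γ) (f : H) : ‖e f‖ ≤ γ * ‖f‖ := by
  rcases eq_or_ne (e f) 0 with h | h
  · rw [h, norm_zero]
    exact mul_nonneg ((norm_nonneg _).trans (hγ 0 (by simp))) (norm_nonneg f)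
  set u := ‖e f‖⁻¹ • e f
  calc ‖e f‖ = ⟪f, r u⟫ := by
        rw [hr, real_inner_smul_left, real_inner_self_eq_norm_sq, sq,
          inv_mul_cancel_left₀ (norm_ne_zero_iff.2 h)]
    _ ≤ ‖f‖ * ‖r u‖ := real_inner_le_norm _ _
    _ ≤ ‖f‖ * γ := by gcongr; exact hγ u (norm_smul_inv_norm h).le
    _ = γ * ‖f‖ := mul_comm _ _

theorem isBoundedLinearMap_of_inner_representer (hr : ∀ f p, ⟪f, r p⟫ = ⟪p, e f⟫) {γ : ℝ}
    (hγ : ∀ p, ‖p‖ ≤ 1 → ‖r p‖ ≤ γ) : IsBoundedLinearMap ℝ e :=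
  (isLinearMap_of_inner_representer hr).with_bound γ (norm_le_of_inner_representer hr hγ)

end Representer

theorem continuousOn_of_continuousOn_inner {H X : Type*} [NormedAddCommGroup H]
    [InnerProductSpace ℝ H] [TopologicalSpace X] {φ : X → H} {S : Set X}
    (h : ContinuousOn (fun q : X × X => ⟪φ q.1, φ q.2⟫) (S ×ˢ S)) : ContinuousOn φ S := by
  intro s hs
  have hsq : ∀ t, ‖φ t - φ s‖ ^ 2 = ⟪φ t, φ t⟫ - ⟪φ s, φ t⟫ - ⟪φ t, φ s⟫ + ⟪φ s, φ s⟫ := by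
    intro t
    rw [← real_inner_self_eq_norm_sq, inner_sub_left, inner_sub_right, inner_sub_right]
    ring
  have hdiag : ContinuousOn (fun t => ⟪φ t, φ t⟫) S :=
    h.comp (continuousOn_id.prodMk continuousOn_id) fun t ht => ⟨ht, ht⟩
  have hleft : ContinuousOn (fun t => ⟪φ s, φ t⟫) S :=
    h.comp (continuousOn_const.prodMk continuousOn_id) fun t ht => ⟨hs, ht⟩
  have hright : ContinuousOn (fun t => ⟪φ t, φ s⟫) S :=
    h.comp (continuousOn_id.prodMk continuousOn_const) fun t ht => ⟨ht, hs⟩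
  have hcont : ContinuousWithinAt (fun t => ‖φ t - φ s‖ ^ 2) S s := by
    simp_rw [hsq]
    exact (((hdiag.sub hleft).sub hright).add continuousOn_const) s hs
  rw [ContinuousWithinAt, tendsto_iff_norm_sub_tendsto_zero]
  simpa [Real.sqrt_sq (norm_nonneg _)] using hcont.sqrt.tendsto

section StrongConvexity

variable {E : Type*} [NormedAddCommGroup E] [NormedSpace ℝ E] {f : E → ℝ} {S : Set E}
  {m : ℝ} {x y : E}

theorem StrongConvexOn.subset {s t : Set E} (hf : StrongConvexOn t m f) (hst : s ⊆ t)
    (hs : Convex ℝ s) : StrongConvexOn s m f :=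
  ⟨hs, fun _ hx _ hy => hf.2 (hst hx) (hst hy)⟩

theorem strongConvexOn_univ_of_le
    (h : ∀ x y : E, ∀ α ∈ Icc (0:ℝ) 1,
      f (α • x + (1 - α) • y) + α * (1 - α) * (m / 2) * ‖x - y‖ ^ 2 ≤ α * f x + (1 - α) * f y) :
    StrongConvexOn univ m f := by
  refine ⟨convex_univ, fun x _ y _ a b ha hb hab => ?_⟩
  obtain rfl : b = 1 - a := by linarith
  have := h x y a ⟨ha, by linarith⟩
  simp only [smul_eq_mul]
  linarith

theorem StrongConvexOn.mul_sq_norm_sub_le (hf : StrongConvexOn S m f) {b : ℝ}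
    (hb : ∀ z ∈ S, b ≤ f z) (hx : x ∈ S) (hy : y ∈ S) :
    m / 8 * ‖x - y‖ ^ 2 ≤ (f x + f y) / 2 - b := by
  have hhalf : (0:ℝ) ≤ 1 / 2 := by norm_num
  have h := hf.2 hx hy hhalf hhalf (add_halves 1)
  have hmid := hb _ (hf.1 hx hy hhalf hhalf (add_halves 1))
  simp only [smul_eq_mul] at h
  linarith

theorem StrongConvexOn.mul_sq_norm_sub_le_of_isMinOn (hf : StrongConvexOn S m f) (hx : x ∈ S)
    (hmin : IsMinOn f S x) (hy : y ∈ S) : m / 4 * ‖y - x‖ ^ 2 ≤ f y - f x := by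
  have := hf.mul_sq_norm_sub_le (isMinOn_iff.1 hmin) hy hx
  linarith

theorem StrongConvexOn.exists_isMinOn [CompleteSpace E] (hf : StrongConvexOn S m f) (hm : 0 < m)
    (hS : IsClosed S) (hne : S.Nonempty) (hfc : ContinuousOn f S) (hb : BddBelow (f '' S)) :
    ∃ x ∈ S, IsMinOn f S x := by
  obtain ⟨v, -, hv, hvS⟩ := exists_seq_tendsto_sInf (hne.image f) hb
  choose u huS hfu using hvS
  have hlow : ∀ z ∈ S, sInf (f '' S) ≤ f z := fun z hz => csInf_le hb (mem_image_of_mem f hz)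
  have hcauchy : CauchySeq u := by
    rw [Metric.cauchySeq_iff']
    intro ε hε
    obtain ⟨N, hN⟩ := eventually_atTop.1
      (hv.eventually (gt_mem_nhds (lt_add_of_pos_right (sInf (f '' S)) (by positivity :
        0 < m / 8 * ε ^ 2))))
    refine ⟨N, fun n hn => ?_⟩
    have h := hf.mul_sq_norm_sub_le hlow (huS n) (huS N)
    rw [hfu, hfu] at h
    have hlt : m / 8 * ‖u n - u N‖ ^ 2 < m / 8 * ε ^ 2 := by linarith [hN n hn, hN N le_rfl]
    rw [dist_eq_norm]
    exact lt_of_pow_lt_pow_left₀ 2 hε.le (lt_of_mul_lt_mul_left hlt (by positivity))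
  obtain ⟨x, hx⟩ := cauchySeq_tendsto_of_complete hcauchy
  have hxS : x ∈ S := hS.mem_of_tendsto hx (Eventually.of_forall huS)
  have hfx : f x = sInf (f '' S) := by
    have hux : Tendsto u atTop (𝓝[S] x) := tendsto_nhdsWithin_iff.2 ⟨hx, .of_forall huS⟩
    exact tendsto_nhds_unique ((hfc x hxS).tendsto.comp hux)
      (by rwa [show f ∘ u = v from funext hfu])
  exact ⟨x, hxS, isMinOn_iff.2 fun z hz => hfx ▸ hlow z hz⟩

theorem StrongConvexOn.eq_of_isMinOn (hf : StrongConvexOn S m f) (hm : 0 < m) (hx : x ∈ S)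
    (hxmin : IsMinOn f S x) (hy : y ∈ S) (hymin : IsMinOn f S y) : y = x := by
  have hgrowth := hf.mul_sq_norm_sub_le_of_isMinOn hx hxmin hy
  have hle := isMinOn_iff.1 hymin x hx
  have : ‖y - x‖ ^ 2 ≤ 0 := by nlinarith
  rw [← sub_eq_zero, ← norm_eq_zero]
  exact pow_eq_zero_iff two_ne_zero |>.1 (le_antisymm this (sq_nonneg _))

theorem StrongConvexOn.norm_sub_le_of_isMinOn_subset {S' : Set E} {x' z : E} {r : ℝ}
    (hf : StrongConvexOn S m f) (hm : 0 < m) (hS' : S' ⊆ S) (hx : x ∈ S)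
    (hxmin : IsMinOn f S x) (hx' : x' ∈ S') (hx'min : IsMinOn f S' x') (hz : z ∈ S')
    (hr : 0 ≤ r) (hfz : f z < f x + m / 4 * r ^ 2) : ‖x' - x‖ ≤ r := by
  have hgrowth := hf.mul_sq_norm_sub_le_of_isMinOn hx hxmin (hS' hx')
  have hle := isMinOn_iff.1 hx'min z hz
  have : m / 4 * ‖x' - x‖ ^ 2 < m / 4 * r ^ 2 := by linarith
  exact (lt_of_pow_lt_pow_left₀ 2 hr (lt_of_mul_lt_mul_left this (by positivity))).le

end StrongConvexity

section StrongConvexityInner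

variable {E : Type*} [NormedAddCommGroup E] [InnerProductSpace ℝ E] {f : E → ℝ} {S : Set E}
  {m : ℝ}

theorem StrongConvexOn.bddBelow_range (hf : StrongConvexOn univ m f) (hm : 0 < m)
    (hfc : Continuous f) : BddBelow (range f) := by
  have hψ : ConvexOn ℝ univ fun x => f x - m / 2 * ‖x‖ ^ 2 := strongConvexOn_iff_convex.1 hf
  have hψc : Continuous fun x => f x - m / 2 * ‖x‖ ^ 2 := by fun_prop
  obtain ⟨l, b, hlb, -⟩ := hψ.exists_affine_le_of_lt (𝕜 := ℝ) (mem_univ 0) (sub_one_lt _)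
    isClosed_univ (hψc.lowerSemicontinuous.lowerSemicontinuousOn _)
  refine ⟨b - ‖l‖ ^ 2 / (2 * m), forall_mem_range.2 fun x => ?_⟩
  have haff : l x + b ≤ f x - m / 2 * ‖x‖ ^ 2 := by simpa using hlb ⟨x, mem_univ x⟩
  have hl : -(‖l‖ * ‖x‖) ≤ l x := neg_le_of_abs_le (by simpa using l.le_opNorm x)
  have hsq : ‖l‖ * ‖x‖ - m / 2 * ‖x‖ ^ 2 ≤ ‖l‖ ^ 2 / (2 * m) := by
    rw [le_div_iff₀ (by positivity)]
    nlinarith [sq_nonneg (m * ‖x‖ - ‖l‖)]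
  linarith

theorem StrongConvexOn.exists_unique_isMinOn [CompleteSpace E] (hf : StrongConvexOn univ m f)
    (hm : 0 < m) (hfc : Continuous f) (hS : IsClosed S) (hSc : Convex ℝ S) (hne : S.Nonempty) :
    ∃ x ∈ S, IsMinOn f S x ∧ ∀ y ∈ S, IsMinOn f S y → y = x := by
  have hfS : StrongConvexOn S m f := hf.subset (subset_univ S) hSc
  obtain ⟨x, hx, hxmin⟩ := hfS.exists_isMinOn hm hS hne hfc.continuousOn
    ((hf.bddBelow_range hm hfc).mono (image_subset_range f S))
  exact ⟨x, hx, hxmin, fun y hy hymin => hfS.eq_of_isMinOn hm hx hxmin hy hymin⟩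

end StrongConvexityInner

theorem exists_pos_lt_of_continuous {E : Type*} [AddCommGroup E] [Module ℝ E]
    [TopologicalSpace E] [IsTopologicalAddGroup E] [ContinuousSMul ℝ E] {f : E → ℝ}
    (hf : Continuous f) (a b : E) {ε : ℝ} (hε : 0 < ε) :
    ∃ θ : ℝ, 0 < θ ∧ θ ≤ 1 ∧ f (θ • a + (1 - θ) • b) < f b + ε := by
  have hcont : Continuous fun θ : ℝ => f (θ • a + (1 - θ) • b) := by fun_prop
  have hnear : ∀ᶠ θ in 𝓝[>] (0 : ℝ), f (θ • a + (1 - θ) • b) < f b + ε := by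
    refine (hcont.tendsto 0).eventually (gt_mem_nhds ?_) |>.filter_mono nhdsWithin_le_nhds
    simpa using hε
  obtain ⟨θ, hθf, hθ⟩ := (hnear.and (Ioc_mem_nhdsGT (zero_lt_one (α := ℝ)))).exists
  exact ⟨θ, hθ.1, hθ.2, hθf⟩

theorem exists_pos_forall_le_of_finite {κ : Type*} [Finite κ] {ε : κ → ℝ} (hε : ∀ i, 0 < ε i) :
    ∃ e, 0 < e ∧ ∀ i, e ≤ ε i := by
  have hnear : ∀ᶠ e in 𝓝[>] (0 : ℝ), ∀ i, e ≤ ε i :=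
    (eventually_all.2 fun i => eventually_le_nhds (hε i)).filter_mono nhdsWithin_le_nhds
  obtain ⟨e, he, hpos⟩ := (hnear.and self_mem_nhdsWithin).exists
  exact ⟨e, hpos, he⟩

theorem IsCompact.exists_pos_forall_dist_le {α X κ : Type*} [PseudoMetricSpace α]
    [PseudoMetricSpace X] [Fintype κ] {s : Set α} (hs : IsCompact s) {f : κ → α → X}
    (hf : ∀ i, ContinuousOn (f i) s) {ρ : ℝ} (hρ : 0 < ρ) :
    ∃ δ, 0 < δ ∧ ∀ i, ∀ x ∈ s, ∀ y ∈ s, dist x y ≤ δ → dist (f i x) (f i y) ≤ ρ := by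
  have hF : ContinuousOn (fun x i => f i x) s := continuousOn_pi.2 hf
  obtain ⟨δ, hδ, hFδ⟩ :=
    Metric.uniformContinuousOn_iff_le.1 (hs.uniformContinuousOn_of_continuous hF) ρ hρ
  exact ⟨δ, hδ, fun i x hx y hy hxy =>
    (dist_le_pi_dist (fun i => f i x) (fun i => f i y) i).trans (hFδ x hx y hy hxy)⟩

section Windows

variable {α H : Type*} [NormedAddCommGroup H] [InnerProductSpace ℝ H] {φ : α → H} {d : α → ℝ}
  {W : Set α} {t₀ : α} {x : H}

theorem sSup_mul_norm_add_inner_le_sInf {a b : ℝ} (ht₀ : t₀ ∈ W)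
    (hφ : ∀ s ∈ W, ‖φ t₀ - φ s‖ ≤ a) (hd : ∀ s ∈ W, d t₀ - b ≤ d s)
    (hx : ⟪x, φ t₀⟫ + a * ‖x‖ + b ≤ d t₀) :
    sSup ((fun s => ‖φ t₀ - φ s‖) '' W) * ‖x‖ + ⟪x, φ t₀⟫ ≤ sInf (d '' W) := by
  have hsup : sSup ((fun s => ‖φ t₀ - φ s‖) '' W) ≤ a :=
    csSup_le ⟨_, mem_image_of_mem _ ht₀⟩ (forall_mem_image.2 hφ)
  have hinf : d t₀ - b ≤ sInf (d '' W) :=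
    le_csInf ⟨_, mem_image_of_mem _ ht₀⟩ (forall_mem_image.2 hd)
  nlinarith [mul_le_mul_of_nonneg_right hsup (norm_nonneg x)]

theorem inner_le_of_sSup_mul_norm_add_inner_le_sInf
    (hφ : BddAbove ((fun s => ‖φ t₀ - φ s‖) '' W)) (hd : BddBelow (d '' W))
    (hx : sSup ((fun s => ‖φ t₀ - φ s‖) '' W) * ‖x‖ + ⟪x, φ t₀⟫ ≤ sInf (d '' W))
    {s : α} (hs : s ∈ W) : ⟪x, φ s⟫ ≤ d s := by
  have hsup := le_csSup hφ (mem_image_of_mem (fun s => ‖φ t₀ - φ s‖) hs)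
  have hinf := csInf_le hd (mem_image_of_mem d hs)
  have hcs : ⟪x, φ s - φ t₀⟫ ≤ ‖x‖ * ‖φ t₀ - φ s‖ := by
    rw [norm_sub_rev]
    exact real_inner_le_norm _ _
  rw [inner_sub_right] at hcs
  nlinarith [mul_le_mul_of_nonneg_left hsup (norm_nonneg x)]

end Windows

section Trajectories

variable {H E κ M : Type*} [NormedAddCommGroup E] [InnerProductSpace ℝ E]

/-- Trajectories through `x₀` at time `0` meeting the affine state constraints on `I` with margin
`s`; for `s = 0` this is the paper's `V₀ ∩ {x(0) = x₀}`. -/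
def affineFeasible (ι : H → ℝ → E) (I : Set ℝ) (c : κ → ℝ → E) (d : κ → ℝ → ℝ) (x₀ : E)
    (s : ℝ) : Set H :=
  {x | ι x 0 = x₀ ∧ ∀ t ∈ I, ∀ i, ⟪c i t, ι x t⟫ + s ≤ d i t}

/-- The paper's `V_{δ,fin} ∩ {x(0) = x₀}` for the covering of `I` by the windows
`[tm m - δm m, tm m + δm m]`. -/
def socFeasible [NormedAddCommGroup H] (ι : H → ℝ → E) (k : ℝ → E → H) (I : Set ℝ)
    (c : κ → ℝ → E) (d : κ → ℝ → ℝ) (x₀ : E) (tm δm : M → ℝ) : Set H :=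
  {x | ι x 0 = x₀ ∧ ∀ m i,
    sSup ((fun s => ‖k (tm m) (c i (tm m)) - k s (c i s)‖) ''
        (Icc (tm m - δm m) (tm m + δm m) ∩ I)) * ‖x‖ + ⟪c i (tm m), ι x (tm m)⟫ ≤
      sInf (d i '' (Icc (tm m - δm m) (tm m + δm m) ∩ I))}

variable {ι : H → ℝ → E} {k : ℝ → E → H} {I : Set ℝ}
  {c : κ → ℝ → E} {d : κ → ℝ → ℝ} {x₀ : E} {tm δm : M → ℝ}

theorem affineFeasible_anti {s s' : ℝ} (hs : s ≤ s') :
    affineFeasible ι I c d x₀ s' ⊆ affineFeasible ι I c d x₀ s :=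
  fun _ hx => ⟨hx.1, fun t ht i => by linarith [hx.2 t ht i]⟩

theorem smul_add_smul_mem_affineFeasible [AddCommGroup H] [Module ℝ H]
    (hev : ∀ t ∈ I, IsLinearMap ℝ (ι · t)) (h0 : 0 ∈ I) {x y : H} {s s' a b : ℝ}
    (hx : x ∈ affineFeasible ι I c d x₀ s)
    (hy : y ∈ affineFeasible ι I c d x₀ s') (ha : 0 ≤ a) (hb : 0 ≤ b) (hab : a + b = 1) :
    a • x + b • y ∈ affineFeasible ι I c d x₀ (a * s + b * s') := by
  have hcomb : ∀ t ∈ I, ι (a • x + b • y) t = a • ι x t + b • ι y t := fun t ht => by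
    rw [(hev t ht).map_add, (hev t ht).map_smul, (hev t ht).map_smul]
  refine ⟨by rw [hcomb 0 h0, hx.1, hy.1, ← add_smul, hab, one_smul], fun t ht i => ?_⟩
  rw [hcomb t ht, inner_add_right, real_inner_smul_right, real_inner_smul_right]
  have hd : a * d i t + b * d i t = d i t := by rw [← add_mul, hab, one_mul]
  nlinarith [mul_le_mul_of_nonneg_left (hx.2 t ht i) ha,
    mul_le_mul_of_nonneg_left (hy.2 t ht i) hb]

theorem convex_affineFeasible [AddCommGroup H] [Module ℝ H]
    (hev : ∀ t ∈ I, IsLinearMap ℝ (ι · t)) (h0 : 0 ∈ I) (s : ℝ) :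
    Convex ℝ (affineFeasible ι I c d x₀ s) := fun _ hx _ hy a b ha hb hab => by
  simpa only [← add_mul, hab, one_mul] using
    smul_add_smul_mem_affineFeasible hev h0 hx hy ha hb hab

theorem isClosed_affineFeasible [TopologicalSpace H] (hev : ∀ t ∈ I, Continuous (ι · t))
    (h0 : 0 ∈ I) (s : ℝ) : IsClosed (affineFeasible ι I c d x₀ s) := by
  simp only [affineFeasible, ofPred_and, ofPred_forall]
  exact (isClosed_eq (hev 0 h0) continuous_const).inter <| isClosed_iInter fun t =>
    isClosed_iInter fun ht => isClosed_iInter fun i =>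
      isClosed_le ((continuous_const.inner (hev t ht)).add continuous_const) continuous_const

theorem isClosed_socFeasible [NormedAddCommGroup H] (hev : ∀ t ∈ I, Continuous (ι · t))
    (h0 : 0 ∈ I) (htm : ∀ m, tm m ∈ I) : IsClosed (socFeasible ι k I c d x₀ tm δm) := by
  simp only [socFeasible, ofPred_and, ofPred_forall]
  exact (isClosed_eq (hev 0 h0) continuous_const).inter <| isClosed_iInter fun m =>
    isClosed_iInter fun i => isClosed_le
      ((continuous_const.mul continuous_norm).add (continuous_const.inner (hev _ (htm m))))
      continuous_const

theorem convex_socFeasible [NormedAddCommGroup H] [NormedSpace ℝ H]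
    (hev : ∀ t ∈ I, IsLinearMap ℝ (ι · t)) (h0 : 0 ∈ I) (htm : ∀ m, tm m ∈ I) :
    Convex ℝ (socFeasible ι k I c d x₀ tm δm) := by
  simp only [socFeasible, ofPred_and, ofPred_forall]
  refine ((convex_singleton x₀).is_linear_preimage (hev 0 h0)).inter <| convex_iInter fun m =>
    convex_iInter fun i => ?_
  have hη : 0 ≤ sSup ((fun s => ‖k (tm m) (c i (tm m)) - k s (c i s)‖) ''
      (Icc (tm m - δm m) (tm m + δm m) ∩ I)) :=
    Real.sSup_nonneg (forall_mem_image.2 fun _ _ => norm_nonneg _)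
  have hlin : ConvexOn ℝ univ fun x => ⟪c i (tm m), ι x (tm m)⟫ :=
    ((innerSL ℝ (c i (tm m))).toLinearMap.comp (IsLinearMap.mk' _ (hev _ (htm m)))).convexOn
      convex_univ
  simpa using ((convexOn_norm convex_univ).smul hη |>.add hlin).convex_le _

variable [NormedAddCommGroup H] [InnerProductSpace ℝ H] {K : ℝ → ℝ → E →L[ℝ] E}

theorem socFeasible_subset_affineFeasible
    (hrepro : ∀ f : H, ∀ t ∈ I, ∀ p, ⟪f, k t p⟫ = ⟪p, ι f t⟫) (hI : IsCompact I)
    (hφ : ∀ i, ContinuousOn (fun s => k s (c i s)) I) (hd : ∀ i, ContinuousOn (d i) I)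
    (htm : ∀ m, tm m ∈ I) (hcover : I ⊆ ⋃ m, Icc (tm m - δm m) (tm m + δm m)) :
    socFeasible ι k I c d x₀ tm δm ⊆ affineFeasible ι I c d x₀ 0 := by
  rintro x ⟨hx0, hx⟩
  refine ⟨hx0, fun t ht i => ?_⟩
  obtain ⟨m, hm⟩ := mem_iUnion.1 (hcover ht)
  have hW : IsCompact (Icc (tm m - δm m) (tm m + δm m) ∩ I) :=
    isCompact_Icc.inter_right hI.isClosed
  have hWI : Icc (tm m - δm m) (tm m + δm m) ∩ I ⊆ I := inter_subset_right
  have hxm := hx m i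
  rw [← hrepro x _ (htm m)] at hxm
  rw [add_zero, ← hrepro x t ht]
  exact inner_le_of_sSup_mul_norm_add_inner_le_sInf (φ := fun s => k s (c i s))
    (hW.bddAbove_image (continuousOn_const.sub ((hφ i).mono hWI)).norm)
    (hW.bddBelow_image ((hd i).mono hWI)) hxm ⟨hm, ht⟩

theorem exists_forall_mem_socFeasible [Fintype κ]
    (hrepro : ∀ f : H, ∀ t ∈ I, ∀ p, ⟪f, k t p⟫ = ⟪p, ι f t⟫) (hI : IsCompact I)
    (hφ : ∀ i, ContinuousOn (fun s => k s (c i s)) I) (hd : ∀ i, ContinuousOn (d i) I)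
    {x : H} {s : ℝ} (hs : 0 < s) (hx : x ∈ affineFeasible ι I c d x₀ s) :
    ∃ δ, 0 < δ ∧ ∀ {M : Type*} (tm δm : M → ℝ), (∀ m, tm m ∈ I) → (∀ m, 0 ≤ δm m) →
      (∀ m, δm m ≤ δ) → x ∈ socFeasible ι k I c d x₀ tm δm := by
  set ρ := s / (‖x‖ + 1)
  have hρ : 0 < ρ := by positivity
  obtain ⟨δ₁, hδ₁, hφδ⟩ := hI.exists_pos_forall_dist_le hφ hρ
  obtain ⟨δ₂, hδ₂, hdδ⟩ := hI.exists_pos_forall_dist_le hd hρ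
  refine ⟨min δ₁ δ₂, lt_min hδ₁ hδ₂, fun tm δm htm hδm hδ => ⟨hx.1, fun m i => ?_⟩⟩
  have hW : ∀ r ∈ Icc (tm m - δm m) (tm m + δm m) ∩ I, dist (tm m) r ≤ min δ₁ δ₂ := by
    rintro r ⟨⟨h1, h2⟩, -⟩
    rw [Real.dist_eq, abs_le]
    constructor <;> linarith [hδ m]
  have htmW : tm m ∈ Icc (tm m - δm m) (tm m + δm m) ∩ I :=
    ⟨⟨by linarith [hδm m], by linarith [hδm m]⟩, htm m⟩
  have hxm := hx.2 _ (htm m) i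
  rw [← hrepro x _ (htm m)] at hxm ⊢
  refine sSup_mul_norm_add_inner_le_sInf (φ := fun s => k s (c i s)) (a := ρ) (b := ρ) htmW
    (fun r hr => ?_) (fun r hr => ?_) ?_
  · rw [← dist_eq_norm]
    exact hφδ i _ (htm m) r hr.2 ((hW r hr).trans (min_le_left _ _))
  · have hdr := hdδ i _ (htm m) r hr.2 ((hW r hr).trans (min_le_right _ _))
    rw [Real.dist_eq, abs_le] at hdr
    linarith [hdr.2]
  · have hsρ : ρ * ‖x‖ + ρ = s := by
      simp only [ρ]
      field_simp
    linarith

theorem norm_sq_eq_inner_kernel (hker : ∀ t ∈ I, ∀ p, ι (k t p) = fun s => K s t p)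
    (hrepro : ∀ f : H, ∀ t ∈ I, ∀ p, ⟪f, k t p⟫ = ⟪p, ι f t⟫) {t : ℝ} (ht : t ∈ I) (p : E) :
    ‖k t p‖ ^ 2 = ⟪p, K t t p⟫ := by
  rw [← real_inner_self_eq_norm_sq, hrepro _ t ht, hker t ht]

theorem norm_kernel_le_sSup (hker : ∀ t ∈ I, ∀ p, ι (k t p) = fun s => K s t p)
    (hrepro : ∀ f : H, ∀ t ∈ I, ∀ p, ⟪f, k t p⟫ = ⟪p, ι f t⟫) (hI : IsCompact I)
    (hK : ContinuousOn (fun q : ℝ × ℝ => K q.1 q.2) (I ×ˢ I)) {t : ℝ} (ht : t ∈ I) {p : E}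
    (hp : ‖p‖ ≤ 1) : ‖k t p‖ ≤ sSup {a | ∃ t ∈ I, ∃ p : E, ‖p‖ ≤ 1 ∧ a = √⟪p, K t t p⟫} := by
  obtain ⟨C, hC⟩ := hI.exists_bound_of_continuousOn
    (hK.comp (continuous_id.prodMk continuous_id).continuousOn fun t ht => ⟨ht, ht⟩)
  refine le_csSup ⟨√C, ?_⟩ ⟨t, ht, p, hp, ?_⟩
  · rintro _ ⟨t, ht, p, hp, rfl⟩
    refine Real.sqrt_le_sqrt ?_
    calc ⟪p, K t t p⟫ ≤ ‖p‖ * ‖K t t p‖ := real_inner_le_norm _ _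
      _ ≤ 1 * (‖K t t‖ * 1) := by gcongr; exact (K t t).le_opNorm_of_le hp
      _ ≤ C := by simpa using hC t ht
  · rw [← norm_sq_eq_inner_kernel hker hrepro ht, Real.sqrt_sq (norm_nonneg _)]

theorem continuousOn_kernel_section (hker : ∀ t ∈ I, ∀ p, ι (k t p) = fun s => K s t p)
    (hrepro : ∀ f : H, ∀ t ∈ I, ∀ p, ⟪f, k t p⟫ = ⟪p, ι f t⟫)
    (hK : ContinuousOn (fun q : ℝ × ℝ => K q.1 q.2) (I ×ˢ I)) {c : ℝ → E}
    (hc : ContinuousOn c I) : ContinuousOn (fun s => k s (c s)) I := by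
  refine continuousOn_of_continuousOn_inner ?_
  have hKswap : ContinuousOn (fun q : ℝ × ℝ => K q.2 q.1) (I ×ˢ I) :=
    hK.comp continuous_swap.continuousOn fun q hq => ⟨hq.2, hq.1⟩
  refine ContinuousOn.congr ((hc.comp continuous_snd.continuousOn fun q hq => hq.2).inner
    (hKswap.clm_apply (hc.comp continuous_fst.continuousOn fun q hq => hq.1))) ?_
  rintro ⟨s, t⟩ ⟨hs, ht⟩
  simp only [Function.comp_apply]
  rw [hrepro _ t ht, hker s hs]

theorem one_div_mul_sSup_norm_sub_le (hrepro : ∀ f : H, ∀ t ∈ I, ∀ p, ⟪f, k t p⟫ = ⟪p, ι f t⟫)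
    {γ : ℝ} (hγ : ∀ t ∈ I, ∀ p, ‖p‖ ≤ 1 → ‖k t p‖ ≤ γ) (x y : H) :
    1 / γ * sSup ((fun t => ‖ι x t - ι y t‖) '' I) ≤ ‖x - y‖ := by
  have hnn : 0 ≤ sSup ((fun t => ‖ι x t - ι y t‖) '' I) :=
    Real.sSup_nonneg (forall_mem_image.2 fun _ _ => norm_nonneg _)
  rcases le_or_gt γ 0 with hγ0 | hγ0
  · exact (mul_nonpos_of_nonpos_of_nonneg (one_div_nonpos.2 hγ0) hnn).trans (norm_nonneg _)
  rw [one_div_mul_eq_div, div_le_iff₀' hγ0]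
  refine Real.sSup_le (forall_mem_image.2 fun t ht => ?_) (by positivity)
  rw [← (isLinearMap_of_inner_representer (hrepro · t ht)).map_sub]
  exact norm_le_of_inner_representer (hrepro · t ht) (hγ t ht) _

theorem exists_pos_forall_isMinOn_socFeasible_near [Fintype κ] [CompleteSpace H]
    (hrepro : ∀ f : H, ∀ t ∈ I, ∀ p, ⟪f, k t p⟫ = ⟪p, ι f t⟫) (hI : IsCompact I) (h0 : 0 ∈ I)
    (hev : ∀ t ∈ I, IsBoundedLinearMap ℝ (ι · t))
    (hφ : ∀ i, ContinuousOn (fun s => k s (c i s)) I) (hd : ∀ i, ContinuousOn (d i) I)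
    {L : H → ℝ} (hLc : Continuous L) {μ : ℝ} (hμ : 0 < μ) (hLμ : StrongConvexOn univ μ L)
    {x₁ : H} {e : ℝ} (he : 0 < e) (hx₁ : x₁ ∈ affineFeasible ι I c d x₀ e)
    {xopt : H} (hxopt : xopt ∈ affineFeasible ι I c d x₀ 0)
    (hxoptmin : IsMinOn L (affineFeasible ι I c d x₀ 0) xopt)
    {r : ℝ} (hr : 0 < r) :
    ∃ δ, 0 < δ ∧ ∀ {M : Type*} (tm δm : M → ℝ), (∀ m, 0 < δm m) → (∀ m, tm m ∈ I) →
      I ⊆ ⋃ m, Icc (tm m - δm m) (tm m + δm m) → (∀ m, δm m ≤ δ) →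
      ∃ y ∈ socFeasible ι k I c d x₀ tm δm, IsMinOn L (socFeasible ι k I c d x₀ tm δm) y ∧
        (∀ y' ∈ socFeasible ι k I c d x₀ tm δm, IsMinOn L (socFeasible ι k I c d x₀ tm δm) y' →
          y' = y) ∧ ‖y - xopt‖ ≤ r := by
  have hcont := fun t ht => (hev t ht).continuous
  have hlin := fun t ht => (hev t ht).toIsLinearMap
  -- moving from `xopt` slightly towards the strictly feasible `x₁` buys a uniform margin
  obtain ⟨θ, hθ, hθ1, hLz⟩ := exists_pos_lt_of_continuous hLc x₁ xopt
    (by positivity : 0 < μ / 4 * r ^ 2)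
  have hz : θ • x₁ + (1 - θ) • xopt ∈ affineFeasible ι I c d x₀ (θ * e) := by
    simpa using smul_add_smul_mem_affineFeasible hlin h0 hx₁ hxopt hθ.le (sub_nonneg.2 hθ1)
      (add_sub_cancel _ _)
  obtain ⟨δ, hδ, hzSd⟩ := exists_forall_mem_socFeasible hrepro hI hφ hd (mul_pos hθ he) hz
  refine ⟨δ, hδ, fun tm δm hδm htm hcover hδle => ?_⟩
  have hzSd' := hzSd tm δm htm (fun m => (hδm m).le) hδle
  obtain ⟨y, hy, hymin, hyuniq⟩ := hLμ.exists_unique_isMinOn hμ hLc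
    (isClosed_socFeasible hcont h0 htm) (convex_socFeasible hlin h0 htm) ⟨_, hzSd'⟩
  refine ⟨y, hy, hymin, hyuniq, ?_⟩
  exact (hLμ.subset (subset_univ _) (convex_affineFeasible hlin h0 0)).norm_sub_le_of_isMinOn_subset
    hμ (socFeasible_subset_affineFeasible hrepro hI hφ hd htm hcover) hxopt hxoptmin hy hymin
    hzSd' hr.le hLz

end Trajectories

theorem SOC_tightening_approximation_general
    {H : Type*} [NormedAddCommGroup H] [InnerProductSpace ℝ H] [CompleteSpace H]
    (N : ℕ) (T : ℝ) (hT : 0 < T)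
    (ι : H → ℝ → EuclideanSpace ℝ (Fin N))
    (K : ℝ → ℝ → EuclideanSpace ℝ (Fin N) →L[ℝ] EuclideanSpace ℝ (Fin N))
    (k : ℝ → EuclideanSpace ℝ (Fin N) → H)
    (hker : ∀ t ∈ Set.Icc (0:ℝ) T, ∀ p, ι (k t p) = fun s => K s t p)
    (hrepro : ∀ (f : H), ∀ t ∈ Set.Icc (0:ℝ) T, ∀ p, ⟪f, k t p⟫ = ⟪p, ι f t⟫)
    (hKunif : UniformContinuousOn (fun q : ℝ × ℝ => K q.1 q.2)
      (Set.Icc 0 T ×ˢ Set.Icc 0 T))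
    (P : ℕ) (c : Fin P → ℝ → EuclideanSpace ℝ (Fin N)) (d : Fin P → ℝ → ℝ)
    (hc : ∀ i, ContinuousOn (c i) (Set.Icc 0 T))
    (hd : ∀ i, ContinuousOn (d i) (Set.Icc 0 T))
    (x₀ : EuclideanSpace ℝ (Fin N))
    (ε : Fin P → ℝ) (hεpos : ∀ i, 0 < ε i)
    (xeps : H) (hxeps0 : ι xeps 0 = x₀)
    (hxepsfeas : ∀ t ∈ Set.Icc (0:ℝ) T, ∀ i, ⟪c i t, ι xeps t⟫ + ε i ≤ d i t)
    (g : EuclideanSpace ℝ (Fin N) → ℝ) (hg : Continuous g)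
    (L : H → ℝ) (hL : ∀ x, L x = g (ι x T) + ‖x‖ ^ 2)
    (μ : ℝ) (hμ : 0 < μ)
    (hsc : ∀ x₁ x₂ : H, ∀ α : ℝ, α ∈ Set.Icc (0:ℝ) 1 →
      L (α • x₁ + (1 - α) • x₂) + α * (1 - α) * (μ / 2) * ‖x₁ - x₂‖ ^ 2 ≤
        α * L x₁ + (1 - α) * L x₂)
    (γK : ℝ)
    (hγK : γK = sSup {a : ℝ | ∃ t ∈ Set.Icc (0:ℝ) T,
      ∃ p : EuclideanSpace ℝ (Fin N), ‖p‖ ≤ 1 ∧ a = Real.sqrt ⟪p, K t t p⟫}) :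
    ∀ lam : ℝ, 0 < lam → ∃ δbar : ℝ, 0 < δbar ∧
      ∀ (N₀ : ℕ) (tm δm : Fin N₀ → ℝ),
        (∀ m, 0 < δm m) → (∀ m, tm m ∈ Set.Icc (0:ℝ) T) →
        (Set.Icc (0:ℝ) T ⊆ ⋃ m, Set.Icc (tm m - δm m) (tm m + δm m)) →
        (∀ m, δm m ≤ δbar) →
        -- the feasible set with affine constraints
        let S0 : Set H := {x : H | ι x 0 = x₀ ∧
          ∀ t ∈ Set.Icc (0:ℝ) T, ∀ i, ⟪c i t, ι x t⟫ ≤ d i t}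
        -- the feasible set with second-order cone constraints
        let Sd : Set H := {x : H | ι x 0 = x₀ ∧
          ∀ m, ∀ i,
            sSup ((fun s => ‖k (tm m) (c i (tm m)) - k s (c i s)‖) ''
              (Set.Icc (tm m - δm m) (tm m + δm m) ∩ Set.Icc 0 T)) * ‖x‖ +
              ⟪c i (tm m), ι x (tm m)⟫ ≤
            sInf (d i '' (Set.Icc (tm m - δm m) (tm m + δm m) ∩ Set.Icc 0 T))}
        ∃ xbar0 : H, xbar0 ∈ S0 ∧ (∀ x ∈ S0, L xbar0 ≤ L x) ∧
          (∀ y ∈ S0, (∀ x ∈ S0, L y ≤ L x) → y = xbar0) ∧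
        ∃ xbard : H, xbard ∈ Sd ∧ (∀ x ∈ Sd, L xbard ≤ L x) ∧
          (∀ y ∈ Sd, (∀ x ∈ Sd, L y ≤ L x) → y = xbard) ∧
          (1 / γK) * sSup ((fun t => ‖ι xbard t - ι xbar0 t‖) '' Set.Icc 0 T) ≤
            ‖xbard - xbar0‖ ∧
          ‖xbard - xbar0‖ ≤ lam := by
  intro lam hlam
  have hI : IsCompact (Icc (0:ℝ) T) := isCompact_Icc
  have h0 : (0:ℝ) ∈ Icc 0 T := ⟨le_rfl, hT.le⟩
  have hkγ : ∀ t ∈ Icc (0:ℝ) T, ∀ p, ‖p‖ ≤ 1 → ‖k t p‖ ≤ γK := fun t ht p hp =>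
    hγK ▸ norm_kernel_le_sSup hker hrepro hI hKunif.continuousOn ht hp
  have hev : ∀ t ∈ Icc (0:ℝ) T, IsBoundedLinearMap ℝ (ι · t) := fun t ht =>
    isBoundedLinearMap_of_inner_representer (hrepro · t ht) (hkγ t ht)
  have hφ : ∀ i, ContinuousOn (fun s => k s (c i s)) (Icc 0 T) := fun i =>
    continuousOn_kernel_section hker hrepro hKunif.continuousOn (hc i)
  have hLc : Continuous L := by
    rw [funext hL]
    exact (hg.comp (hev T ⟨hT.le, le_rfl⟩).continuous).add (by fun_prop)
  have hLμ : StrongConvexOn univ μ L := strongConvexOn_univ_of_le hsc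
  obtain ⟨e, he, heε⟩ := exists_pos_forall_le_of_finite hεpos
  have hxeps : xeps ∈ affineFeasible ι (Icc 0 T) c d x₀ e :=
    ⟨hxeps0, fun t ht i => by linarith [heε i, hxepsfeas t ht i]⟩
  obtain ⟨x0b, hx0b, hmin0, huniq0⟩ := hLμ.exists_unique_isMinOn hμ hLc
    (isClosed_affineFeasible (fun t ht => (hev t ht).continuous) h0 0)
    (convex_affineFeasible (fun t ht => (hev t ht).toIsLinearMap) h0 0)
    ⟨xeps, affineFeasible_anti he.le hxeps⟩
  obtain ⟨δbar, hδbar, hnear⟩ := exists_pos_forall_isMinOn_socFeasible_near hrepro hI h0 hev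
    hφ hd hLc hμ hLμ he hxeps hx0b hmin0 hlam
  refine ⟨δbar, hδbar, fun N₀ tm δm hδm htm hcover hδmle => ?_⟩
  obtain ⟨xdb, hxdb, hmind, huniqd, hxdb_near⟩ := hnear tm δm hδm htm hcover hδmle
  intro S0 Sd
  have hS0 : S0 = affineFeasible ι (Icc 0 T) c d x₀ 0 := by
    simp only [S0, affineFeasible, add_zero]
  rw [hS0]
  exact ⟨x0b, hx0b, isMinOn_iff.1 hmin0, fun y hy hymin => huniq0 y hy (isMinOn_iff.2 hymin),
    xdb, hxdb, isMinOn_iff.1 hmind, fun y hy hymin => huniqd y hy (isMinOn_iff.2 hymin),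
    one_div_mul_sSup_norm_sub_le hrepro hkγ xdb x0b, hxdb_near⟩

/-- **Main result: approximation by SOC constraints.** In a vRKHS `H` of
functions `[0,T] → ℝ^N` with uniformly continuous kernel, continuous constraints
`cᵢ, dᵢ`, a strictly feasible trajectory `x^ε` through `x₀` (with slack `εᵢ > 0`),
continuous terminal cost `g` and `μ`-strongly convex objective `L x = g(x(T)) + ‖x‖²`:
for every `λ > 0` there is `δ̄ > 0` such that, for every finite covering of `[0,T]` by
intervals `[tₘ−δₘ, tₘ+δₘ]` with `δₘ ≤ δ̄`, the minimizers `x̄⁰` (affine constraints) and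
`x̄^{δ,fin}` (SOC constraints) exist, are unique, and satisfy
`(1/γ_K)·sup_t ‖x̄^{δ,fin}(t) − x̄⁰(t)‖ ≤ ‖x̄^{δ,fin} − x̄⁰‖_H ≤ λ`. -/
theorem SOC_tightening_approximation
    {H : Type*} [NormedAddCommGroup H] [InnerProductSpace ℝ H] [CompleteSpace H]
    (N : ℕ) (T : ℝ) (hT : 0 < T)
    (ι : H → ℝ → EuclideanSpace ℝ (Fin N))
    (K : ℝ → ℝ → EuclideanSpace ℝ (Fin N) →L[ℝ] EuclideanSpace ℝ (Fin N))
    (k : ℝ → EuclideanSpace ℝ (Fin N) → H)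
    (hker : ∀ t ∈ Set.Icc (0:ℝ) T, ∀ p, ι (k t p) = fun s => K s t p)
    (hrepro : ∀ (f : H), ∀ t ∈ Set.Icc (0:ℝ) T, ∀ p, ⟪f, k t p⟫ = ⟪p, ι f t⟫)
    (hKunif : UniformContinuousOn (fun q : ℝ × ℝ => K q.1 q.2)
      (Set.Icc 0 T ×ˢ Set.Icc 0 T))
    (P : ℕ) (c : Fin P → ℝ → EuclideanSpace ℝ (Fin N)) (d : Fin P → ℝ → ℝ)
    (hc : ∀ i, ContinuousOn (c i) (Set.Icc 0 T))
    (hd : ∀ i, ContinuousOn (d i) (Set.Icc 0 T))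
    (x₀ : EuclideanSpace ℝ (Fin N)) (hx₀ : ∀ i, ⟪c i 0, x₀⟫ < d i 0)
    (ε : Fin P → ℝ) (hεpos : ∀ i, 0 < ε i)
    (xeps : H) (hxeps0 : ι xeps 0 = x₀)
    (hxepsfeas : ∀ t ∈ Set.Icc (0:ℝ) T, ∀ i, ⟪c i t, ι xeps t⟫ + ε i ≤ d i t)
    (g : EuclideanSpace ℝ (Fin N) → ℝ) (hg : Continuous g)
    (L : H → ℝ) (hL : ∀ x, L x = g (ι x T) + ‖x‖ ^ 2)
    (μ : ℝ) (hμ : 0 < μ)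
    (hsc : ∀ x₁ x₂ : H, ∀ α : ℝ, α ∈ Set.Icc (0:ℝ) 1 →
      L (α • x₁ + (1 - α) • x₂) + α * (1 - α) * (μ / 2) * ‖x₁ - x₂‖ ^ 2 ≤
        α * L x₁ + (1 - α) * L x₂)
    (γK : ℝ)
    (hγK : γK = sSup {a : ℝ | ∃ t ∈ Set.Icc (0:ℝ) T,
      ∃ p : EuclideanSpace ℝ (Fin N), ‖p‖ ≤ 1 ∧ a = Real.sqrt ⟪p, K t t p⟫}) :
    ∀ lam : ℝ, 0 < lam → ∃ δbar : ℝ, 0 < δbar ∧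
      ∀ (N₀ : ℕ) (tm δm : Fin N₀ → ℝ),
        (∀ m, 0 < δm m) → (∀ m, tm m ∈ Set.Icc (0:ℝ) T) →
        (Set.Icc (0:ℝ) T ⊆ ⋃ m, Set.Icc (tm m - δm m) (tm m + δm m)) →
        (∀ m, δm m ≤ δbar) →
        -- the feasible set with affine constraints
        let S0 : Set H := {x : H | ι x 0 = x₀ ∧
          ∀ t ∈ Set.Icc (0:ℝ) T, ∀ i, ⟪c i t, ι x t⟫ ≤ d i t}
        -- the feasible set with second-order cone constraints
        let Sd : Set H := {x : H | ι x 0 = x₀ ∧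
          ∀ m, ∀ i,
            sSup ((fun s => ‖k (tm m) (c i (tm m)) - k s (c i s)‖) ''
              (Set.Icc (tm m - δm m) (tm m + δm m) ∩ Set.Icc 0 T)) * ‖x‖ +
              ⟪c i (tm m), ι x (tm m)⟫ ≤
            sInf (d i '' (Set.Icc (tm m - δm m) (tm m + δm m) ∩ Set.Icc 0 T))}
        ∃ xbar0 : H, xbar0 ∈ S0 ∧ (∀ x ∈ S0, L xbar0 ≤ L x) ∧
          (∀ y ∈ S0, (∀ x ∈ S0, L y ≤ L x) → y = xbar0) ∧
        ∃ xbard : H, xbard ∈ Sd ∧ (∀ x ∈ Sd, L xbard ≤ L x) ∧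
          (∀ y ∈ Sd, (∀ x ∈ Sd, L y ≤ L x) → y = xbard) ∧
          (1 / γK) * sSup ((fun t => ‖ι xbard t - ι xbar0 t‖) '' Set.Icc 0 T) ≤
            ‖xbard - xbar0‖ ∧
          ‖xbard - xbar0‖ ≤ lam :=
  SOC_tightening_approximation_general N T hT ι K k hker hrepro hKunif P c d hc hd x₀ ε hεpos xeps
    hxeps0 hxepsfeas g hg L hL μ hμ hsc γK hγK
end

section
/- Assume A : [0,T] → ℝ^{N×N} and B : [0,T] → ℝ^{N×M} are continuous, and C : [0,T] → ℝ^{P×N} (with rows c_i(t)ᵀ) and d : [0,T] → ℝ^P are continuously differentiable. Let x₀ ∈ ℝ^N, M_u > 0, and set R := (1+‖x₀‖)·exp(T·sup_t‖A(t)‖ + T·M_u·sup_t‖B(t)‖). Define h_i(t,x) := c_i(t)ᵀx − d_i(t) and ξ_i(t,x,u) := c_i'(t)ᵀx − d_i'(t) + c_i(t)ᵀ(A(t)x + B(t)u). Suppose the inward-pointing condition holds: for all t ∈ [0,T] and all x with ‖x‖ ≤ R and C(t)x ≤ d(t), there exists u with ‖u‖ ≤ M_u such that ξ_i(t,x,u)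 < 0 for every i in the active set I_{t,x} := {i : c_i(t)ᵀx = d_i(t)}. Then there exist e ∈ ℝ^P with all entries positive, ρ > 0, and M_v > 0 such that: for every t ∈ [0,T] and x with ‖x‖ ≤ R, C(t)x ≤ d(t), and I_{t,x} ≠ ∅, there exists u with ‖u‖ ≤ M_u satisfying ‖A(t)x + B(t)u‖ ≤ M_v and ξ_i(t,x,u) ≤ −ρ for every i with h_i(t,x) > −e_i. -/
open scoped RealInnerProductSpace

set_option maxHeartbeats 2000000 in
/-- Under continuity of `A, B`, `C¹`-smoothness of the constraint data
`cᵢ, dᵢ`, and the inward-pointing condition on the active set at radius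
`R = (1+‖x₀‖)exp(T·sup‖A‖ + T·M_u·sup‖B‖)`, there are uniform constants `e > 0`
(componentwise), `ρ > 0` and `M_v > 0` such that at every constrained point with some
active constraint one can find a control `u` with `‖u‖ ≤ M_u`, velocity bound
`‖A(t)x + B(t)u‖ ≤ M_v`, and `ξᵢ(t,x,u) ≤ −ρ` for all nearly active indices
(`hᵢ(t,x) > −eᵢ`). -/
theorem inward_pointing_uniform_constants
    (N M P : ℕ) (T : ℝ) (hT : 0 < T)
    (A : ℝ → EuclideanSpace ℝ (Fin N) →L[ℝ] EuclideanSpace ℝ (Fin N))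
    (B : ℝ → EuclideanSpace ℝ (Fin M) →L[ℝ] EuclideanSpace ℝ (Fin N))
    (hA : Continuous A) (hB : Continuous B)
    (c : Fin P → ℝ → EuclideanSpace ℝ (Fin N)) (d : Fin P → ℝ → ℝ)
    (cd : Fin P → ℝ → EuclideanSpace ℝ (Fin N)) (dd : Fin P → ℝ → ℝ)
    (hc : ∀ i t, HasDerivAt (c i) (cd i t) t) (hcd : ∀ i, Continuous (cd i))
    (hd : ∀ i t, HasDerivAt (d i) (dd i t) t) (hdd : ∀ i, Continuous (dd i))
    (x₀ : EuclideanSpace ℝ (Fin N)) (Mu : ℝ) (hMu : 0 < Mu)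
    (Rad : ℝ)
    (hRad : Rad = (1 + ‖x₀‖) *
      Real.exp (T * sSup ((fun t => ‖A t‖) '' Set.Icc 0 T) +
        T * Mu * sSup ((fun t => ‖B t‖) '' Set.Icc 0 T)))
    -- the inward-pointing condition (on the active set)
    (hIP : ∀ t ∈ Set.Icc (0:ℝ) T, ∀ x : EuclideanSpace ℝ (Fin N),
      ‖x‖ ≤ Rad → (∀ i, ⟪c i t, x⟫ ≤ d i t) →
      ∃ u : EuclideanSpace ℝ (Fin M), ‖u‖ ≤ Mu ∧
        ∀ i, ⟪c i t, x⟫ = d i t →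
          ⟪cd i t, x⟫ - dd i t + ⟪c i t, A t x + B t u⟫ < 0) :
    ∃ e : Fin P → ℝ, (∀ i, 0 < e i) ∧
    ∃ ρ : ℝ, 0 < ρ ∧
    ∃ Mv : ℝ, 0 < Mv ∧
      ∀ t ∈ Set.Icc (0:ℝ) T, ∀ x : EuclideanSpace ℝ (Fin N),
        ‖x‖ ≤ Rad → (∀ i, ⟪c i t, x⟫ ≤ d i t) → (∃ i, ⟪c i t, x⟫ = d i t) →
        ∃ u : EuclideanSpace ℝ (Fin M), ‖u‖ ≤ Mu ∧
          ‖A t x + B t u‖ ≤ Mv ∧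
          ∀ i, -(e i) < ⟪c i t, x⟫ - d i t →
            ⟪cd i t, x⟫ - dd i t + ⟪c i t, A t x + B t u⟫ ≤ -ρ := by
  classical
  have hc_cont : ∀ i, Continuous (c i) := fun i =>
    continuous_iff_continuousAt.2 fun t => (hc i t).continuousAt
  have hd_cont : ∀ i, Continuous (d i) := fun i =>
    continuous_iff_continuousAt.2 fun t => (hd i t).continuousAt
  have hh_cont : ∀ i, Continuous (fun p : ℝ × EuclideanSpace ℝ (Fin N) =>
      ⟪c i p.1, p.2⟫ - d i p.1) := fun i =>
    (((hc_cont i).comp continuous_fst).inner continuous_snd).sub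
      ((hd_cont i).comp continuous_fst)
  have hg_cont : ∀ (i : Fin P) (u : EuclideanSpace ℝ (Fin M)), Continuous
      (fun p : ℝ × EuclideanSpace ℝ (Fin N) =>
        ⟪cd i p.1, p.2⟫ - dd i p.1 + ⟪c i p.1, A p.1 p.2 + B p.1 u⟫) := fun i u =>
    ((((hcd i).comp continuous_fst).inner continuous_snd).sub
      ((hdd i).comp continuous_fst)).add
      (((hc_cont i).comp continuous_fst).inner
        (((hA.comp continuous_fst).clm_apply continuous_snd).add
          ((hB.comp continuous_fst).clm_apply continuous_const)))
  have hRadpos : 0 < Rad := by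
    rw [hRad]; positivity
  set sA := sSup ((fun t => ‖A t‖) '' Set.Icc 0 T) with hsA
  set sB := sSup ((fun t => ‖B t‖) '' Set.Icc 0 T) with hsB
  have hsA_le : ∀ t ∈ Set.Icc (0:ℝ) T, ‖A t‖ ≤ sA := fun t ht =>
    le_csSup (isCompact_Icc.image (continuous_norm.comp hA)).bddAbove ⟨t, ht, rfl⟩
  have hsB_le : ∀ t ∈ Set.Icc (0:ℝ) T, ‖B t‖ ≤ sB := fun t ht =>
    le_csSup (isCompact_Icc.image (continuous_norm.comp hB)).bddAbove ⟨t, ht, rfl⟩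
  have hsA0 : 0 ≤ sA := le_trans (norm_nonneg _) (hsA_le 0 ⟨le_refl 0, hT.le⟩)
  have hsB0 : 0 ≤ sB := le_trans (norm_nonneg _) (hsB_le 0 ⟨le_refl 0, hT.le⟩)
  set Mv := sA * Rad + sB * Mu + 1 with hMvdef
  have hMvpos : 0 < Mv := by
    have h1 : 0 ≤ sA * Rad := mul_nonneg hsA0 hRadpos.le
    have h2 : 0 ≤ sB * Mu := mul_nonneg hsB0 hMu.le
    rw [hMvdef]; linarith
  have hMv_bound : ∀ t ∈ Set.Icc (0:ℝ) T, ∀ x : EuclideanSpace ℝ (Fin N), ‖x‖ ≤ Rad →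
      ∀ u : EuclideanSpace ℝ (Fin M), ‖u‖ ≤ Mu → ‖A t x + B t u‖ ≤ Mv := by
    intro t ht x hx u hu
    have h1 : ‖A t x‖ ≤ sA * Rad :=
      le_trans ((A t).le_opNorm x) (mul_le_mul (hsA_le t ht) hx (norm_nonneg _) hsA0)
    have h2 : ‖B t u‖ ≤ sB * Mu :=
      le_trans ((B t).le_opNorm u) (mul_le_mul (hsB_le t ht) hu (norm_nonneg _) hsB0)
    calc ‖A t x + B t u‖ ≤ ‖A t x‖ + ‖B t u‖ := norm_add_le _ _
      _ ≤ sA * Rad + sB * Mu := add_le_add h1 h2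
      _ ≤ Mv := by rw [hMvdef]; linarith
  set K : Set (ℝ × EuclideanSpace ℝ (Fin N)) :=
    {p | p.1 ∈ Set.Icc (0:ℝ) T ∧ ‖p.2‖ ≤ Rad ∧ ∀ i, ⟪c i p.1, p.2⟫ ≤ d i p.1} with hKdef
  have hKcompact : IsCompact K := by
    have h1 : IsCompact ((Set.Icc (0:ℝ) T) ×ˢ
        Metric.closedBall (0 : EuclideanSpace ℝ (Fin N)) Rad) :=
      isCompact_Icc.prod (isCompact_closedBall 0 Rad)
    have h2 : IsClosed {p : ℝ × EuclideanSpace ℝ (Fin N) | ∀ i, ⟪c i p.1, p.2⟫ ≤ d i p.1} := by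
      have heq : {p : ℝ × EuclideanSpace ℝ (Fin N) | ∀ i, ⟪c i p.1, p.2⟫ ≤ d i p.1} =
          ⋂ i, {p : ℝ × EuclideanSpace ℝ (Fin N) | ⟪c i p.1, p.2⟫ - d i p.1 ≤ 0} := by
        ext p; simp [sub_nonpos]
      rw [heq]
      exact isClosed_iInter fun i => isClosed_le (hh_cont i) continuous_const
    have heq : K = ((Set.Icc (0:ℝ) T) ×ˢ Metric.closedBall (0 : EuclideanSpace ℝ (Fin N)) Rad) ∩
        {p | ∀ i, ⟪c i p.1, p.2⟫ ≤ d i p.1} := by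
      ext p
      simp only [hKdef, Set.mem_setOf_eq, Set.mem_inter_iff, Set.mem_prod,
        Metric.mem_closedBall, dist_zero_right]
      tauto
    rw [heq]; exact h1.inter_right h2
  have key : ∀ z ∈ K, ∃ ε, 0 < ε ∧ ∀ᶠ w in nhds z,
      ∃ u : EuclideanSpace ℝ (Fin M), ‖u‖ ≤ Mu ∧ ∀ i : Fin P,
        -ε < ⟪c i w.1, w.2⟫ - d i w.1 →
        ⟪cd i w.1, w.2⟫ - dd i w.1 + ⟪c i w.1, A w.1 w.2 + B w.1 u⟫ ≤ -ε := by
    rintro ⟨t, x⟩ ⟨ht, hx, hcons⟩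
    obtain ⟨u, hu, hstrict⟩ := hIP t ht x hx hcons
    have hi : ∀ i : Fin P, ∃ εi, 0 < εi ∧ ∀ᶠ w in nhds ((t, x) : ℝ × EuclideanSpace ℝ (Fin N)),
        (-εi < ⟪c i w.1, w.2⟫ - d i w.1 →
         ⟪cd i w.1, w.2⟫ - dd i w.1 + ⟪c i w.1, A w.1 w.2 + B w.1 u⟫ ≤ -εi) := by
      intro i
      by_cases hact : ⟪c i t, x⟫ = d i t
      · have hglt : ⟪cd i t, x⟫ - dd i t + ⟪c i t, A t x + B t u⟫ < 0 := hstrict i hact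
        refine ⟨-(⟪cd i t, x⟫ - dd i t + ⟪c i t, A t x + B t u⟫) / 2, by linarith, ?_⟩
        have hev : ∀ᶠ w in nhds ((t, x) : ℝ × EuclideanSpace ℝ (Fin N)),
            ⟪cd i w.1, w.2⟫ - dd i w.1 + ⟪c i w.1, A w.1 w.2 + B w.1 u⟫ <
              (⟪cd i t, x⟫ - dd i t + ⟪c i t, A t x + B t u⟫) / 2 :=
          (hg_cont i u).continuousAt.eventually_lt continuousAt_const (by linarith)
        exact hev.mono fun w hw _ => by linarith
      · have hlt : ⟪c i t, x⟫ - d i t < 0 := sub_neg.2 (lt_of_le_of_ne (hcons i) hact)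
        refine ⟨-(⟪c i t, x⟫ - d i t) / 2, by linarith, ?_⟩
        have hev : ∀ᶠ w in nhds ((t, x) : ℝ × EuclideanSpace ℝ (Fin N)),
            ⟪c i w.1, w.2⟫ - d i w.1 < (⟪c i t, x⟫ - d i t) / 2 :=
          (hh_cont i).continuousAt.eventually_lt continuousAt_const (by linarith)
        exact hev.mono fun w hw hpre => absurd hpre (by push_neg; linarith)
    choose εi hεipos hεiev using hi
    obtain ⟨ε, hεpos, hεle⟩ : ∃ ε, 0 < ε ∧ ∀ i : Fin P, ε ≤ εi i := by
      rcases isEmpty_or_nonempty (Fin P) with hPe | hPn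
      · exact ⟨1, one_pos, fun i => isEmptyElim i⟩
      · exact ⟨Finset.univ.inf' Finset.univ_nonempty εi,
          (Finset.lt_inf'_iff _).2 fun i _ => hεipos i,
          fun i => Finset.inf'_le _ (Finset.mem_univ i)⟩
    refine ⟨ε, hεpos, (Filter.eventually_all.2 hεiev).mono fun w hw => ⟨u, hu, fun i hlt => ?_⟩⟩
    have h1 := hw i (by linarith [hεle i])
    linarith [hεle i]
  choose! ε' hε'pos hε'ev using key
  obtain ⟨s, hsK, hcov⟩ := hKcompact.elim_nhds_subcover
    (fun z => {w : ℝ × EuclideanSpace ℝ (Fin N) |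
      ∃ u : EuclideanSpace ℝ (Fin M), ‖u‖ ≤ Mu ∧ ∀ i : Fin P,
        -(ε' z) < ⟪c i w.1, w.2⟫ - d i w.1 →
        ⟪cd i w.1, w.2⟫ - dd i w.1 + ⟪c i w.1, A w.1 w.2 + B w.1 u⟫ ≤ -(ε' z)})
    (fun z hz => hε'ev z hz)
  rcases s.eq_empty_or_nonempty with rfl | hs
  · refine ⟨fun _ => 1, fun _ => one_pos, 1, one_pos, Mv, hMvpos, ?_⟩
    intro t ht x hx hcons _
    exfalso
    have hmem : ((t, x) : ℝ × EuclideanSpace ℝ (Fin N)) ∈ K := ⟨ht, hx, hcons⟩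
    simpa using hcov hmem
  · set ρ := s.inf' hs ε' with hρdef
    have hρpos : 0 < ρ := (Finset.lt_inf'_iff hs).2 fun z hz => hε'pos z (hsK z hz)
    refine ⟨fun _ => ρ, fun _ => hρpos, ρ, hρpos, Mv, hMvpos, ?_⟩
    intro t ht x hx hcons _
    have hmem : ((t, x) : ℝ × EuclideanSpace ℝ (Fin N)) ∈ K := ⟨ht, hx, hcons⟩
    obtain ⟨z, hz, hwU⟩ := Set.mem_iUnion₂.1 (hcov hmem)
    obtain ⟨u, hu, himp⟩ := hwU
    have hρle : ρ ≤ ε' z := Finset.inf'_le _ hz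
    refine ⟨u, hu, hMv_bound t ht x hx u hu, fun i hlt => ?_⟩
    have h1 := himp i (by simp only at hlt ⊢; linarith)
    simp only at h1 ⊢
    linarith
end

section
/- Assume A : [0,T] → ℝ^{N×N} and B : [0,T] → ℝ^{N×M} are continuous, C : [0,T] → ℝ^{P×N} and d : [0,T] → ℝ^P are continuously differentiable, x₀ ∈ ℝ^N satisfies C(0)x₀ < d(0) componentwise, and set R := (1+‖x₀‖)·exp(T·sup_t‖A(t)‖ + T·M_u·sup_t‖B(t)‖) for a given M_u > 0. Assume the inward-pointing condition: for all t ∈ [0,T] and x with ‖x‖ ≤ R and C(t)x ≤ d(t), there exists u with ‖u‖ ≤ M_u such that c_i'(t)ᵀx − d_i'(t) + c_i(t)ᵀ(A(t)x + B(t)u) < 0 for every i with c_i(t)ᵀx = d_i(t). For ε ∈ ℝ^P with nonnegative entries define 𝒜_ε := {(t,x) : t ∈ [0,T], C(t)x + ε ≤ d(t)} and its slices 𝒜_{ε,t} := {x : (t,x) ∈ 𝒜_ε}. Then there exist ε₀ ∈ ℝ^P with positive entries and constants M_v > 0, ξ > 0, η > 0 such that: for every ε ∈ ℝ^P with 0 ≤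 ε ≤ ε₀ componentwise and every (t,x) ∈ (∂𝒜_ε + ({0} × ηB_N)) ∩ 𝒜_ε with ‖x‖ ≤ R−1, there exists u with ‖u‖ ≤ M_u such that v := A(t)x + B(t)u satisfies ‖v‖ ≤ M_v and, for all δ ∈ [0,ξ] with t+δ ∈ [0,T] and all y ∈ (x + ξB_N) ∩ 𝒜_{ε,t}, the inclusion y + δ(v + ξB_N) ⊆ 𝒜_{ε,t+δ} holds. -/
/-!
Compactness of the feasible set turns the pointwise inward-pointing condition into a uniform
one: some `θ > 0` works for every feasible `(t, x)`, in the sense that a single control makes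
every `θ`-nearly active constraint decrease at rate at least `θ`. Along a short segment
`s ↦ y + (s - t) • z` the rate of change of `⟪c i s, ·⟫ - d i s` is uniformly close to its value
at `(t, x, v)`, so nearly active constraints keep decreasing, while a constraint with slack
more than `θ` loses at most `θ / 2` of it over a time `ξ`. Shrinking by `ε ≤ θ / 4` therefore
keeps the segment in `𝒜_ε`.
-/

open Set Filter Topology
open scoped RealInnerProductSpace

theorem IsCompact.exists_uniform_margin {X U ι : Type*} [TopologicalSpace X] [Finite ι]
    {K : Set X} (hK : IsCompact K) {S : Set U} {g : ι → X → ℝ} {F : U → ι → X → ℝ}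
    (hg : ∀ i, Continuous (g i)) (hF : ∀ u i, Continuous (F u i))
    (h : ∀ p ∈ K, ∃ u ∈ S, ∀ i, g i p ≤ 0 → F u i p < 0) :
    ∃ θ > 0, ∀ p ∈ K, ∃ u ∈ S, ∀ i, g i p ≤ θ → F u i p ≤ -θ := by
  -- `W n`: points admitting a control for which every constraint has slack or rate margin
  -- `1 / (n + 1)`; these form an increasing open cover of `K`.
  set W : ℕ → Set X := fun n =>
    ⋃ u ∈ S, ⋂ i, {p | 1 / (n + 1 : ℝ) < max (g i p) (-F u i p)} with hW
  have hW_open : ∀ n, IsOpen (W n) := fun n =>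
    isOpen_biUnion fun u _ => isOpen_iInter_of_finite fun i =>
      isOpen_lt continuous_const ((hg i).max (hF u i).neg)
  have hW_mono : Monotone W := fun m n hmn => iUnion₂_mono fun u _ => iInter_mono fun _ =>
    ofPred_subset_ofPred.2 fun _ hp => (Nat.one_div_le_one_div hmn).trans_lt hp
  have hK_cover : K ⊆ ⋃ n, W n := by
    intro p hp
    obtain ⟨u, hu, hpu⟩ := h p hp
    have hpos : ∀ i, 0 < max (g i p) (-F u i p) := fun i => by
      rcases le_or_gt (g i p) 0 with hgi | hgi
      · exact lt_max_of_lt_right (neg_pos.2 (hpu i hgi))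
      · exact lt_max_of_lt_left hgi
    obtain ⟨n, hn⟩ := (eventually_all.2 fun i =>
      tendsto_one_div_add_atTop_nhds_zero_nat.eventually (gt_mem_nhds (hpos i))).exists
    simp only [hW, mem_iUnion, mem_iInter, mem_ofPred_eq]
    exact ⟨n, u, hu, hn⟩
  obtain ⟨n, hn⟩ := hK.elim_directed_cover W hW_open hK_cover hW_mono.directed_le
  refine ⟨1 / (n + 1), by positivity, fun p hp => ?_⟩
  have hpW := hn hp
  simp only [hW, mem_iUnion, mem_iInter, mem_ofPred_eq] at hpW
  obtain ⟨u, hu, hpu⟩ := hpW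
  refine ⟨u, hu, fun i hgi => ?_⟩
  rcases lt_max_iff.1 (hpu i) with hslack | hrate <;> linarith

section Tangential

variable {E : Type*} [NormedAddCommGroup E] [InnerProductSpace ℝ E]
  {c cd : ℝ → E} {d dd : ℝ → ℝ}

theorem inner_add_smul_sub_le_of_rate_le (hc : ∀ s, HasDerivAt c (cd s) s)
    (hd : ∀ s, HasDerivAt d (dd s) s) {t δ L : ℝ} (hδ : 0 ≤ δ) (y z : E)
    (hL : ∀ s ∈ Icc t (t + δ), ⟪cd s, y + (s - t) • z⟫ - dd s + ⟪c s, z⟫ ≤ L) :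
    ⟪c (t + δ), y + δ • z⟫ - d (t + δ) ≤ ⟪c t, y⟫ - d t + L * δ := by
  set g : ℝ → ℝ := fun s => ⟪c s, y + (s - t) • z⟫ - d s
  have hg : ∀ s, HasDerivAt g (⟪cd s, y + (s - t) • z⟫ - dd s + ⟪c s, z⟫) s := fun s => by
    have hw : HasDerivAt (fun s : ℝ => y + (s - t) • z) z s := by
      simpa using (((hasDerivAt_id s).sub_const t).smul_const z).const_add y
    exact (((hc s).inner ℝ hw).sub (hd s)).congr_deriv (by ring)
  have := (convex_Icc t (t + δ)).image_sub_le_mul_sub_of_deriv_le (f := g)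
    (fun s _ => (hg s).continuousAt.continuousWithinAt)
    (fun s _ => (hg s).differentiableAt.differentiableWithinAt)
    (fun s hs => (hg s).deriv ▸ hL s (interior_subset hs)) t (left_mem_Icc.2 (by linarith))
    (t + δ) (right_mem_Icc.2 (by linarith)) (by linarith)
  simp only [g, sub_self, zero_smul, add_zero, add_sub_cancel_left] at this
  linarith

theorem eventually_mul_lt_of_pos (k : ℝ) {m : ℝ} (hm : 0 < m) :
    ∀ᶠ ξ in 𝓝[>] (0 : ℝ), ξ * k < m :=
  nhdsWithin_le_nhds <|
    (continuous_id.mul continuous_const).tendsto' 0 0 (zero_mul k) |>.eventually (gt_mem_nhds hm)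

variable [ProperSpace E]

theorem exists_eventually_rate_along_segment_le (hc : Continuous c) (hcd : Continuous cd)
    (hdd : Continuous dd) (T R V : ℝ) {θ : ℝ} (hθ : 0 < θ) :
    ∃ Φmax, ∀ᶠ ξ in 𝓝[>] (0 : ℝ), ∀ t ∈ Icc 0 T, ∀ x v : E, ‖x‖ ≤ R - 1 → ‖v‖ ≤ V →
      ∀ δ ∈ Icc 0 ξ, t + δ ≤ T → ∀ y : E, ‖y - x‖ ≤ ξ → ∀ z : E, ‖z - v‖ ≤ ξ →
      ∀ s ∈ Icc t (t + δ), ⟪cd s, y + (s - t) • z⟫ - dd s + ⟪c s, z⟫ ≤ Φmax ∧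
        ⟪cd s, y + (s - t) • z⟫ - dd s + ⟪c s, z⟫ < ⟪cd t, x⟫ - dd t + ⟪c t, v⟫ + θ := by
  set Φ : ℝ × E × E → ℝ := fun q => ⟪cd q.1, q.2.1⟫ - dd q.1 + ⟪c q.1, q.2.2⟫
  have hΦ_cont : Continuous Φ := by fun_prop
  set D : Set (ℝ × E × E) := Icc 0 T ×ˢ Metric.closedBall 0 R ×ˢ Metric.closedBall 0 (V + 1)
  have hD_compact : IsCompact D :=
    isCompact_Icc.prod ((isCompact_closedBall _ _).prod (isCompact_closedBall _ _))
  obtain ⟨Φmax, hΦmax⟩ := hD_compact.bddAbove_image hΦ_cont.continuousOn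
  obtain ⟨ξ₁, hξ₁, hΦ_uc⟩ := Metric.uniformContinuousOn_iff.1
    (hD_compact.uniformContinuousOn_of_continuous hΦ_cont.continuousOn) θ hθ
  refine ⟨Φmax, ?_⟩
  filter_upwards [eventually_mul_lt_of_pos (V + 2) hξ₁, eventually_mul_lt_of_pos (V + 2) one_pos]
    with ξ hξ_uc hξ_ball
  intro t ht x v hx hv δ hδ htδ y hy z hz s hs
  have hV : 0 ≤ V := (norm_nonneg v).trans hv
  have hξ : 0 ≤ ξ := hδ.1.trans hδ.2
  have hst : s - t ≤ ξ := by linarith [hs.2, hδ.2]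
  have hz_norm : ‖z‖ ≤ V + 1 := by
    have := norm_le_norm_add_norm_sub' z v
    nlinarith
  have hw : ‖y + (s - t) • z - x‖ ≤ ξ * (V + 2) := by
    calc ‖y + (s - t) • z - x‖ = ‖(y - x) + (s - t) • z‖ := by rw [add_sub_right_comm]
      _ ≤ ‖y - x‖ + (s - t) * ‖z‖ := (norm_add_le _ _).trans_eq (by
        rw [norm_smul, Real.norm_of_nonneg (sub_nonneg.2 hs.1)])
      _ ≤ ξ + ξ * (V + 1) := by gcongr
      _ = ξ * (V + 2) := by ring
  have hxvD : (t, x, v) ∈ D :=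
    ⟨ht, mem_closedBall_zero_iff.2 (by linarith), mem_closedBall_zero_iff.2 (by linarith)⟩
  have hsD : (s, y + (s - t) • z, z) ∈ D := by
    refine ⟨⟨ht.1.trans hs.1, hs.2.trans htδ⟩, mem_closedBall_zero_iff.2 ?_,
      mem_closedBall_zero_iff.2 hz_norm⟩
    linarith [norm_le_norm_add_norm_sub' (y + (s - t) • z) x]
  have hdist : dist (s, y + (s - t) • z, z) (t, x, v) < ξ₁ := by
    rw [Prod.dist_eq, Prod.dist_eq, Real.dist_eq, dist_eq_norm, dist_eq_norm,
      abs_of_nonneg (sub_nonneg.2 hs.1)]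
    exact max_lt (by nlinarith) (max_lt (by linarith) (by nlinarith))
  have hΦ_close := hΦ_uc _ hsD _ hxvD hdist
  rw [Real.dist_eq, abs_lt] at hΦ_close
  exact ⟨hΦmax ⟨_, hsD, rfl⟩, by linarith [hΦ_close.2]⟩

theorem eventually_uniformly_tangential (hc : ∀ s, HasDerivAt c (cd s) s) (hcd : Continuous cd)
    (hd : ∀ s, HasDerivAt d (dd s) s) (hdd : Continuous dd) (T R V : ℝ) {θ : ℝ} (hθ : 0 < θ) :
    ∀ᶠ ξ in 𝓝[>] (0 : ℝ), ∀ t ∈ Icc 0 T, ∀ x v : E, ‖x‖ ≤ R - 1 → ‖v‖ ≤ V →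
      (d t - θ ≤ ⟪c t, x⟫ → ⟪cd t, x⟫ - dd t + ⟪c t, v⟫ ≤ -θ) →
      ∀ δ ∈ Icc 0 ξ, t + δ ≤ T → ∀ y : E, ‖y - x‖ ≤ ξ → ∀ z : E, ‖z - v‖ ≤ ξ →
      ∀ e ≤ θ / 4, ⟪c t, y⟫ + e ≤ d t → ⟪c (t + δ), y + δ • z⟫ + e ≤ d (t + δ) := by
  have hc_cont : Continuous c := continuous_iff_continuousAt.2 fun s => (hc s).continuousAt
  obtain ⟨Φmax, hrate⟩ :=
    exists_eventually_rate_along_segment_le hc_cont hcd hdd T R V (half_pos hθ)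
  obtain ⟨Cc, hCc⟩ := (isCompact_Icc (a := 0) (b := T)).exists_bound_of_continuousOn
    hc_cont.continuousOn
  have hθ4 : 0 < θ / 4 := by positivity
  filter_upwards [hrate, eventually_mul_lt_of_pos Cc hθ4,
    eventually_mul_lt_of_pos (max Φmax 0) hθ4] with ξ hξ_rate hξ_Cc hξ_Φ
  intro t ht x v hx hv hinward δ hδ htδ y hy z hz e he hye
  have hrate_s := hξ_rate t ht x v hx hv δ hδ htδ y hy z hz
  by_cases hact : d t - θ ≤ ⟪c t, x⟫
  · have hincr := inner_add_smul_sub_le_of_rate_le hc hd hδ.1 y z (L := 0) fun s hs => by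
      linarith [(hrate_s s hs).2, hinward hact]
    linarith
  · have hincr := inner_add_smul_sub_le_of_rate_le hc hd hδ.1 y z (L := max Φmax 0)
      fun s hs => (hrate_s s hs).1.trans (le_max_left _ _)
    have hy_inner : ⟪c t, y⟫ ≤ ⟪c t, x⟫ + Cc * ξ := by
      have h1 := real_inner_le_norm (c t) (y - x)
      rw [inner_sub_right] at h1
      have h2 : ‖c t‖ * ‖y - x‖ ≤ Cc * ξ :=
        mul_le_mul (hCc t ht) hy (norm_nonneg _) ((norm_nonneg _).trans (hCc t ht))
      linarith
    have hδ_Φ : max Φmax 0 * δ ≤ max Φmax 0 * ξ :=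
      mul_le_mul_of_nonneg_left hδ.2 (le_max_right _ _)
    linarith

end Tangential

theorem isCompact_feasible_ball {E ι : Type*} [NormedAddCommGroup E] [InnerProductSpace ℝ E]
    [ProperSpace E] [Finite ι] {c : ι → ℝ → E} {d : ι → ℝ → ℝ}
    (hc : ∀ i, Continuous (c i)) (hd : ∀ i, Continuous (d i)) (T R : ℝ) :
    IsCompact {p : ℝ × E | p.1 ∈ Icc 0 T ∧ ‖p.2‖ ≤ R ∧ ∀ i, ⟪c i p.1, p.2⟫ ≤ d i p.1} := by
  have hclosed : IsClosed {p : ℝ × E | ∀ i, ⟪c i p.1, p.2⟫ ≤ d i p.1} := by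
    simp only [ofPred_forall]
    exact isClosed_iInter fun i => isClosed_le (by fun_prop) (by fun_prop)
  convert (isCompact_Icc (a := 0) (b := T)).prod (isCompact_closedBall (0 : E) R)
    |>.inter_right hclosed using 1
  ext p
  simp [and_assoc]

theorem exists_pos_bound_apply_add_apply {E U F : Type*} [NormedAddCommGroup E]
    [NormedSpace ℝ E] [ProperSpace E] [NormedAddCommGroup U] [NormedSpace ℝ U] [ProperSpace U]
    [NormedAddCommGroup F] [NormedSpace ℝ F] {A : ℝ → E →L[ℝ] F} {B : ℝ → U →L[ℝ] F}
    (hA : Continuous A) (hB : Continuous B) (T R Mu : ℝ) :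
    ∃ Mv > 0, ∀ t ∈ Icc 0 T, ∀ x : E, ‖x‖ ≤ R → ∀ u : U, ‖u‖ ≤ Mu → ‖A t x + B t u‖ ≤ Mv := by
  obtain ⟨C, hC⟩ := (isCompact_Icc.prod ((isCompact_closedBall (0 : E) R).prod
    (isCompact_closedBall (0 : U) Mu))).exists_bound_of_continuousOn
    (f := fun q : ℝ × E × U => A q.1 q.2.1 + B q.1 q.2.2) (by fun_prop)
  exact ⟨max C 1, by positivity, fun t ht x hx u hu =>
    (hC (t, x, u) ⟨ht, mem_closedBall_zero_iff.2 hx, mem_closedBall_zero_iff.2 hu⟩).trans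
      (le_max_left _ _)⟩

theorem inward_pointing_tangential_viability_general
    (N M P : ℕ) (T : ℝ)
    (A : ℝ → EuclideanSpace ℝ (Fin N) →L[ℝ] EuclideanSpace ℝ (Fin N))
    (B : ℝ → EuclideanSpace ℝ (Fin M) →L[ℝ] EuclideanSpace ℝ (Fin N))
    (hA : Continuous A) (hB : Continuous B)
    (c : Fin P → ℝ → EuclideanSpace ℝ (Fin N)) (d : Fin P → ℝ → ℝ)
    (cd : Fin P → ℝ → EuclideanSpace ℝ (Fin N)) (dd : Fin P → ℝ → ℝ)
    (hc : ∀ i t, HasDerivAt (c i) (cd i t) t) (hcd : ∀ i, Continuous (cd i))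
    (hd : ∀ i t, HasDerivAt (d i) (dd i t) t) (hdd : ∀ i, Continuous (dd i))
    (Mu : ℝ)
    (Rad : ℝ)
    (hIP : ∀ t ∈ Set.Icc (0:ℝ) T, ∀ x : EuclideanSpace ℝ (Fin N),
      ‖x‖ ≤ Rad → (∀ i, ⟪c i t, x⟫ ≤ d i t) →
      ∃ u : EuclideanSpace ℝ (Fin M), ‖u‖ ≤ Mu ∧
        ∀ i, ⟪c i t, x⟫ = d i t →
          ⟪cd i t, x⟫ - dd i t + ⟪c i t, A t x + B t u⟫ < 0)
    -- the shrunk constraint sets 𝒜_ε and their relative boundaries in [0,T] × ℝ^N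
    (Aset : (Fin P → ℝ) → Set (ℝ × EuclideanSpace ℝ (Fin N)))
    (hAset : ∀ ε, Aset ε = {q : ℝ × EuclideanSpace ℝ (Fin N) |
      q.1 ∈ Set.Icc (0:ℝ) T ∧ ∀ i, ⟪c i q.1, q.2⟫ + ε i ≤ d i q.1})
    (Bd : (Fin P → ℝ) → Set (ℝ × EuclideanSpace ℝ (Fin N))) :
    ∃ ε₀ : Fin P → ℝ, (∀ i, 0 < ε₀ i) ∧
    ∃ Mv : ℝ, 0 < Mv ∧ ∃ ξ : ℝ, 0 < ξ ∧ ∃ η : ℝ, 0 < η ∧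
      ∀ ε : Fin P → ℝ, (∀ i, 0 ≤ ε i ∧ ε i ≤ ε₀ i) →
      ∀ t : ℝ, ∀ x : EuclideanSpace ℝ (Fin N),
        (t, x) ∈ Aset ε →
        (∃ x' : EuclideanSpace ℝ (Fin N), (t, x') ∈ Bd ε ∧ ‖x - x'‖ ≤ η) →
        ‖x‖ ≤ Rad - 1 →
        ∃ u : EuclideanSpace ℝ (Fin M), ‖u‖ ≤ Mu ∧
          ‖A t x + B t u‖ ≤ Mv ∧
          ∀ δ : ℝ, δ ∈ Set.Icc (0:ℝ) ξ → t + δ ∈ Set.Icc (0:ℝ) T →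
            ∀ y : EuclideanSpace ℝ (Fin N), ‖y - x‖ ≤ ξ →
              (∀ i, ⟪c i t, y⟫ + ε i ≤ d i t) →
              ∀ z : EuclideanSpace ℝ (Fin N), ‖z - (A t x + B t u)‖ ≤ ξ →
                ∀ i, ⟪c i (t + δ), y + δ • z⟫ + ε i ≤ d i (t + δ) := by
  have hc_cont : ∀ i, Continuous (c i) := fun i =>
    continuous_iff_continuousAt.2 fun t => (hc i t).continuousAt
  have hd_cont : ∀ i, Continuous (d i) := fun i =>
    continuous_iff_continuousAt.2 fun t => (hd i t).continuousAt
  obtain ⟨θ, hθ, hmargin⟩ := (isCompact_feasible_ball hc_cont hd_cont T Rad).exists_uniform_margin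
    (S := Metric.closedBall 0 Mu) (g := fun i p => d i p.1 - ⟪c i p.1, p.2⟫)
    (F := fun u i p => ⟪cd i p.1, p.2⟫ - dd i p.1 + ⟪c i p.1, A p.1 p.2 + B p.1 u⟫)
    (fun i => by fun_prop) (fun u i => by fun_prop) fun p ⟨ht, hx, hfeas⟩ => by
      obtain ⟨u, hu, hinward⟩ := hIP p.1 ht p.2 hx hfeas
      exact ⟨u, mem_closedBall_zero_iff.2 hu, fun i hi => hinward i (by linarith [hfeas i])⟩
  obtain ⟨Mv, hMv, hvel⟩ := exists_pos_bound_apply_add_apply hA hB T Rad Mu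
  obtain ⟨ξ, hξ_tangential, hξ⟩ := ((eventually_all.2 fun i => eventually_uniformly_tangential
    (hc i) (hcd i) (hd i) (hdd i) T Rad Mv hθ).and self_mem_nhdsWithin).exists
  refine ⟨fun _ => θ / 4, fun _ => by positivity, Mv, hMv, ξ, hξ, 1, one_pos, ?_⟩
  rintro ε hε t x hx - hxR
  rw [hAset] at hx
  have hx_feas : ∀ i, ⟪c i t, x⟫ ≤ d i t := fun i => by linarith [hx.2 i, (hε i).1]
  obtain ⟨u, hu, hu_margin⟩ := hmargin (t, x) ⟨hx.1, by linarith, hx_feas⟩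
  have hv := hvel t hx.1 x (by linarith) u (mem_closedBall_zero_iff.1 hu)
  refine ⟨u, mem_closedBall_zero_iff.1 hu, hv, fun δ hδ htδ y hy hyA z hz i => ?_⟩
  exact hξ_tangential i t hx.1 x _ hxR hv (fun hi => hu_margin i (by linarith)) δ hδ htδ.2
    y hy z hz (ε i) (hε i).2 (hyA i)

/-- Under continuity of `A, B`, `C¹`-smoothness of `cᵢ, dᵢ`, strict
feasibility of `x₀` and the inward-pointing condition at radius
`R = (1+‖x₀‖)exp(T·sup‖A‖ + T·M_u·sup‖B‖)`, there are `ε₀ > 0` (componentwise) and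
constants `M_v, ξ, η > 0` such that for every `0 ≤ ε ≤ ε₀` and every point `(t,x)` of the
shrunk constraint set `𝒜_ε` that is within distance `η` (in space, at the same time) of
the relative boundary `∂𝒜_ε` and with `‖x‖ ≤ R−1`, there is a control `u`, `‖u‖ ≤ M_u`,
whose velocity `v = A(t)x + B(t)u` satisfies `‖v‖ ≤ M_v` and the uniform tangential
inclusion `y + δ(v + ξ𝔹_N) ⊆ 𝒜_{ε,t+δ}` for all `δ ∈ [0,ξ]` with `t+δ ∈ [0,T]` and all
`y ∈ (x + ξ𝔹_N) ∩ 𝒜_{ε,t}`. -/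
theorem inward_pointing_tangential_viability
    (N M P : ℕ) (T : ℝ) (hT : 0 < T)
    (A : ℝ → EuclideanSpace ℝ (Fin N) →L[ℝ] EuclideanSpace ℝ (Fin N))
    (B : ℝ → EuclideanSpace ℝ (Fin M) →L[ℝ] EuclideanSpace ℝ (Fin N))
    (hA : Continuous A) (hB : Continuous B)
    (c : Fin P → ℝ → EuclideanSpace ℝ (Fin N)) (d : Fin P → ℝ → ℝ)
    (cd : Fin P → ℝ → EuclideanSpace ℝ (Fin N)) (dd : Fin P → ℝ → ℝ)
    (hc : ∀ i t, HasDerivAt (c i) (cd i t) t) (hcd : ∀ i, Continuous (cd i))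
    (hd : ∀ i t, HasDerivAt (d i) (dd i t) t) (hdd : ∀ i, Continuous (dd i))
    (x₀ : EuclideanSpace ℝ (Fin N)) (hx₀ : ∀ i, ⟪c i 0, x₀⟫ < d i 0)
    (Mu : ℝ) (hMu : 0 < Mu)
    (Rad : ℝ)
    (hRad : Rad = (1 + ‖x₀‖) *
      Real.exp (T * sSup ((fun t => ‖A t‖) '' Set.Icc 0 T) +
        T * Mu * sSup ((fun t => ‖B t‖) '' Set.Icc 0 T)))
    (hIP : ∀ t ∈ Set.Icc (0:ℝ) T, ∀ x : EuclideanSpace ℝ (Fin N),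
      ‖x‖ ≤ Rad → (∀ i, ⟪c i t, x⟫ ≤ d i t) →
      ∃ u : EuclideanSpace ℝ (Fin M), ‖u‖ ≤ Mu ∧
        ∀ i, ⟪c i t, x⟫ = d i t →
          ⟪cd i t, x⟫ - dd i t + ⟪c i t, A t x + B t u⟫ < 0)
    -- the shrunk constraint sets 𝒜_ε and their relative boundaries in [0,T] × ℝ^N
    (Aset : (Fin P → ℝ) → Set (ℝ × EuclideanSpace ℝ (Fin N)))
    (hAset : ∀ ε, Aset ε = {q : ℝ × EuclideanSpace ℝ (Fin N) |
      q.1 ∈ Set.Icc (0:ℝ) T ∧ ∀ i, ⟪c i q.1, q.2⟫ + ε i ≤ d i q.1})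
    (Bd : (Fin P → ℝ) → Set (ℝ × EuclideanSpace ℝ (Fin N)))
    (hBd : ∀ ε, Bd ε = Aset ε ∩
      closure ((Set.Icc (0:ℝ) T ×ˢ (Set.univ : Set (EuclideanSpace ℝ (Fin N)))) \
        Aset ε)) :
    ∃ ε₀ : Fin P → ℝ, (∀ i, 0 < ε₀ i) ∧
    ∃ Mv : ℝ, 0 < Mv ∧ ∃ ξ : ℝ, 0 < ξ ∧ ∃ η : ℝ, 0 < η ∧
      ∀ ε : Fin P → ℝ, (∀ i, 0 ≤ ε i ∧ ε i ≤ ε₀ i) →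
      ∀ t : ℝ, ∀ x : EuclideanSpace ℝ (Fin N),
        (t, x) ∈ Aset ε →
        (∃ x' : EuclideanSpace ℝ (Fin N), (t, x') ∈ Bd ε ∧ ‖x - x'‖ ≤ η) →
        ‖x‖ ≤ Rad - 1 →
        ∃ u : EuclideanSpace ℝ (Fin M), ‖u‖ ≤ Mu ∧
          ‖A t x + B t u‖ ≤ Mv ∧
          ∀ δ : ℝ, δ ∈ Set.Icc (0:ℝ) ξ → t + δ ∈ Set.Icc (0:ℝ) T →
            ∀ y : EuclideanSpace ℝ (Fin N), ‖y - x‖ ≤ ξ →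
              (∀ i, ⟪c i t, y⟫ + ε i ≤ d i t) →
              ∀ z : EuclideanSpace ℝ (Fin N), ‖z - (A t x + B t u)‖ ≤ ξ →
                ∀ i, ⟪c i (t + δ), y + δ • z⟫ + ε i ≤ d i (t + δ) :=
  inward_pointing_tangential_viability_general N M P T A B hA hB c d cd dd hc hcd hd hdd Mu Rad hIP
    Aset hAset Bd
end
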